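/- Let x₁,…,x_T ∈ ℝ^d with ‖x_t‖₂ ≤ G and λ ≥ max{1, G²}, and A_t = λI + ∑_{s=1}^t x_s x_s^T. Then ∑_{t=1}^T ‖x_t‖²_{A_{t-1}^{-1}} ≤ 2 log(det(A_T)/det(λI)) ≤ 2d log(1 + TG²/(λd)). -/

import Mathlib

/-!
With `u_t = ‖x_t‖²_{A_{t-1}⁻¹}`, the matrix determinant lemma gives
`det A_t = det A_{t-1} (1 + u_t)`, so `det A_T / det (λI) = ∏ (1 + u_t)`. The hypothesis
`λ ≥ max 1 G²` forces `u_t ≤ ‖x_t‖² / λ ≤ 1`, where `u ≤ 2 log (1 + u)`; summing gives the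
first inequality. For the second, AM-GM on the eigenvalues bounds `det A_T` by
`(tr A_T / d)^d ≤ (λ + T G² / d)^d`.
-/

open Matrix

namespace Real

theorem le_two_mul_log_one_add {u : ℝ} (h0 : 0 ≤ u) (h2 : u ≤ 2) : u ≤ 2 * log (1 + u) := by
  have h := le_log_one_add_of_nonneg h0
  have : u / 2 ≤ 2 * u / (u + 2) := by
    rw [div_le_div_iff₀ (by norm_num) (by linarith)]
    nlinarith
  linarith

theorem sum_log_le_card_mul_log {ι : Type*} {s : Finset ι} {z : ι → ℝ} {c : ℝ}
    (hz : ∀ i ∈ s, 0 < z i) (hc : 0 < c) (hsum : ∑ i ∈ s, z i ≤ s.card * c) :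
    ∑ i ∈ s, log (z i) ≤ s.card * log c := by
  have hpoint : ∀ i ∈ s, log (z i) ≤ log c + (z i / c - 1) := fun i hi => by
    have := log_le_sub_one_of_pos (div_pos (hz i hi) hc)
    rwa [log_div (hz i hi).ne' hc.ne', sub_le_iff_le_add'] at this
  calc ∑ i ∈ s, log (z i) ≤ ∑ i ∈ s, (log c + (z i / c - 1)) := Finset.sum_le_sum hpoint
    _ = s.card * log c + ((∑ i ∈ s, z i) / c - s.card) := by
      simp [Finset.sum_add_distrib, Finset.sum_sub_distrib, Finset.sum_div]
    _ ≤ s.card * log c := by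
      have : (∑ i ∈ s, z i) / c ≤ s.card := by rwa [div_le_iff₀ hc]
      linarith

end Real

namespace Matrix

variable {n : Type*} [Fintype n] [DecidableEq n]

theorem det_add_vecMulVec {A : Matrix n n ℝ} (hA : IsUnit A.det) (u v : n → ℝ) :
    (A + vecMulVec u v).det = A.det * (1 + v ⬝ᵥ (A⁻¹ *ᵥ u)) := by
  rw [vecMulVec_eq Unit, det_add_replicateCol_mul_replicateRow hA, det_unique (n := Unit),
    add_apply, one_apply_eq, Matrix.mul_assoc, ← replicateCol_mulVec,
    replicateRow_mul_replicateCol_apply]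

theorem PosDef.log_det_le_card_mul_log {A : Matrix n n ℝ} (hA : A.PosDef) {c : ℝ} (hc : 0 < c)
    (htr : A.trace ≤ Fintype.card n * c) : Real.log A.det ≤ Fintype.card n * Real.log c := by
  have hpos := hA.eigenvalues_pos
  rw [hA.isHermitian.trace_eq_sum_eigenvalues] at htr
  rw [hA.isHermitian.det_eq_prod_eigenvalues]
  simp only [RCLike.ofReal_real_eq_id, id] at htr ⊢
  rw [Real.log_prod fun i _ => (hpos i).ne']
  exact Real.sum_log_le_card_mul_log (fun i _ => hpos i) hc htr

theorem dotProduct_smul_one_add_inv_mulVec_le {S : Matrix n n ℝ} (hS : S.PosSemidef) {lam : ℝ}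
    (hlam : 0 < lam) (v : n → ℝ) :
    v ⬝ᵥ ((lam • 1 + S)⁻¹ *ᵥ v) ≤ (v ⬝ᵥ v) / lam := by
  -- With `y = A⁻¹ v`: `lam ‖y‖² ≤ ⟪v, y⟫` since `S ≥ 0`, and `0 ≤ ‖lam y - v‖²` turns this into
  -- `lam ⟪v, y⟫ ≤ ‖v‖²`.
  set A := lam • 1 + S
  have hA : IsUnit A.det := ((PosDef.one.smul hlam).add_posSemidef hS).det_pos.ne'.isUnit
  set y := A⁻¹ *ᵥ v
  have hAy : A *ᵥ y = v := by rw [mulVec_mulVec, mul_nonsing_inv _ hA, one_mulVec]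
  have hlower : lam * (y ⬝ᵥ y) ≤ v ⬝ᵥ y := by
    have hSy : 0 ≤ y ⬝ᵥ (S *ᵥ y) := by simpa using hS.dotProduct_mulVec_nonneg y
    have : v ⬝ᵥ y = lam * (y ⬝ᵥ y) + y ⬝ᵥ (S *ᵥ y) := by
      rw [← hAy, dotProduct_comm, add_mulVec, smul_mulVec, one_mulVec, dotProduct_add,
        dotProduct_smul, smul_eq_mul]
    linarith
  have hsq : 0 ≤ lam * (lam * (y ⬝ᵥ y)) - 2 * lam * (v ⬝ᵥ y) + v ⬝ᵥ v := by
    have := dotProduct_self_star_nonneg (lam • y - v)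
    simp only [star_trivial, sub_dotProduct, dotProduct_sub, smul_dotProduct, dotProduct_smul,
      smul_eq_mul, dotProduct_comm y v] at this
    linarith
  rw [le_div_iff₀ hlam]
  nlinarith [mul_le_mul_of_nonneg_left hlower hlam.le]

end Matrix

section DesignMatrix

variable {n : Type*} [Fintype n] [DecidableEq n]

/-- `designMatrix lam x t` is the paper's `A_t`, built from the first `t` vectors
`x 0, …, x (t - 1)`. -/
def designMatrix (lam : ℝ) (x : ℕ → n → ℝ) (t : ℕ) : Matrix n n ℝ :=
  lam • 1 + ∑ s ∈ Finset.range t, vecMulVec (x s) (x s)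

variable {lam : ℝ} (x : ℕ → n → ℝ)

omit [DecidableEq n] in
theorem posSemidef_sum_vecMulVec_self (t : ℕ) :
    (∑ s ∈ Finset.range t, vecMulVec (x s) (x s)).PosSemidef :=
  posSemidef_sum _ fun s _ => by simpa using posSemidef_vecMulVec_self_star (x s)

theorem posDef_designMatrix (hlam : 0 < lam) (t : ℕ) : (designMatrix lam x t).PosDef :=
  (PosDef.one.smul hlam).add_posSemidef (posSemidef_sum_vecMulVec_self x t)

theorem det_designMatrix (hlam : 0 < lam) (T : ℕ) :
    (designMatrix lam x T).det = (lam • (1 : Matrix n n ℝ)).det *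
      ∏ t ∈ Finset.range T, (1 + x t ⬝ᵥ ((designMatrix lam x t)⁻¹ *ᵥ x t)) := by
  induction T with
  | zero => simp [designMatrix]
  | succ T ih =>
    have hsucc : designMatrix lam x (T + 1) = designMatrix lam x T + vecMulVec (x T) (x T) := by
      rw [designMatrix, designMatrix, Finset.sum_range_succ, add_assoc]
    rw [hsucc, det_add_vecMulVec (posDef_designMatrix x hlam T).det_pos.ne'.isUnit, ih,
      Finset.prod_range_succ, mul_assoc]

theorem trace_designMatrix (T : ℕ) :
    (designMatrix lam x T).trace = lam * Fintype.card n + ∑ t ∈ Finset.range T, x t ⬝ᵥ x t := by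
  simp [designMatrix, trace_sum, trace_vecMulVec]

theorem sum_le_two_mul_log_det_designMatrix_div (hlam : 0 < lam) (T : ℕ)
    (hx : ∀ t < T, x t ⬝ᵥ ((designMatrix lam x t)⁻¹ *ᵥ x t) ≤ 2) :
    ∑ t ∈ Finset.range T, x t ⬝ᵥ ((designMatrix lam x t)⁻¹ *ᵥ x t) ≤
      2 * Real.log ((designMatrix lam x T).det / (lam • (1 : Matrix n n ℝ)).det) := by
  have hnonneg (t : ℕ) : 0 ≤ x t ⬝ᵥ ((designMatrix lam x t)⁻¹ *ᵥ x t) := by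
    simpa using (posDef_designMatrix x hlam t).posSemidef.inv.dotProduct_mulVec_nonneg (x t)
  have hdet0 : (lam • (1 : Matrix n n ℝ)).det ≠ 0 := (PosDef.one.smul hlam).det_pos.ne'
  rw [det_designMatrix x hlam, mul_div_cancel_left₀ _ hdet0,
    Real.log_prod fun t _ => by linarith [hnonneg t], Finset.mul_sum]
  exact Finset.sum_le_sum fun t ht =>
    Real.le_two_mul_log_one_add (hnonneg t) (hx t (Finset.mem_range.mp ht))

theorem log_det_designMatrix_div_le (hlam : 0 < lam) (T : ℕ) {G : ℝ}
    (hx : ∀ t < T, x t ⬝ᵥ x t ≤ G ^ 2) :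
    Real.log ((designMatrix lam x T).det / (lam • (1 : Matrix n n ℝ)).det) ≤
      Fintype.card n * Real.log (1 + T * G ^ 2 / (lam * Fintype.card n)) := by
  set d := Fintype.card n
  rcases d.eq_zero_or_pos with hd | hd
  · have : IsEmpty n := Fintype.card_eq_zero_iff.mp hd
    simp [hd]
  have hd' : (0 : ℝ) < d := by exact_mod_cast hd
  set r := T * G ^ 2 / (lam * d)
  have hr : 0 ≤ r := by positivity
  have htr : (designMatrix lam x T).trace ≤ d * (lam * (1 + r)) := by
    have hsum : ∑ t ∈ Finset.range T, x t ⬝ᵥ x t ≤ T * G ^ 2 := by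
      simpa using Finset.sum_le_card_nsmul (Finset.range T) _ _ fun t ht =>
        hx t (Finset.mem_range.mp ht)
    have : d * (lam * (1 + r)) = lam * d + T * G ^ 2 := by
      simp only [r]; field_simp
    rw [trace_designMatrix, this]
    linarith
  have hlog := (posDef_designMatrix x hlam T).log_det_le_card_mul_log (by positivity) htr
  rw [Real.log_mul hlam.ne' (by positivity)] at hlog
  rw [det_smul, det_one, mul_one, Real.log_div (posDef_designMatrix x hlam T).det_pos.ne'
    (by positivity), Real.log_pow]
  linarith

end DesignMatrix

theorem elliptical_potential {d : ℕ} (T : ℕ)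
    (x : ℕ → Fin d → ℝ) (G lam : ℝ)
    (hx : ∀ t, Real.sqrt (x t ⬝ᵥ x t) ≤ G)
    (hlam : max 1 (G ^ 2) ≤ lam) :
    (∑ t ∈ Finset.range T,
        x t ⬝ᵥ ((lam • (1 : Matrix (Fin d) (Fin d) ℝ)
          + ∑ s ∈ Finset.range t, vecMulVec (x s) (x s))⁻¹ *ᵥ x t))
      ≤ 2 * Real.log ((lam • (1 : Matrix (Fin d) (Fin d) ℝ)
          + ∑ s ∈ Finset.range T, vecMulVec (x s) (x s)).det
          / (lam • (1 : Matrix (Fin d) (Fin d) ℝ)).det) ∧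
    2 * Real.log ((lam • (1 : Matrix (Fin d) (Fin d) ℝ)
          + ∑ s ∈ Finset.range T, vecMulVec (x s) (x s)).det
          / (lam • (1 : Matrix (Fin d) (Fin d) ℝ)).det)
      ≤ 2 * (d : ℝ) * Real.log (1 + (T : ℝ) * G ^ 2 / (lam * (d : ℝ))) := by
  obtain ⟨hlam1, hlamG⟩ := max_le_iff.mp hlam
  have hlam0 : 0 < lam := one_pos.trans_le hlam1
  have hxG (t : ℕ) : x t ⬝ᵥ x t ≤ G ^ 2 := (Real.sqrt_le_iff.mp (hx t)).2
  have hpotential (t : ℕ) : x t ⬝ᵥ ((designMatrix lam x t)⁻¹ *ᵥ x t) ≤ 2 :=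
    calc _ ≤ x t ⬝ᵥ x t / lam :=
          dotProduct_smul_one_add_inv_mulVec_le (posSemidef_sum_vecMulVec_self x t) hlam0 (x t)
      _ ≤ 1 := (div_le_one hlam0).mpr ((hxG t).trans hlamG)
      _ ≤ 2 := one_le_two
  refine ⟨sum_le_two_mul_log_det_designMatrix_div x hlam0 T fun t _ => hpotential t, ?_⟩
  have := log_det_designMatrix_div_le x hlam0 T fun t _ => hxG t
  rw [Fintype.card_fin] at this
  change 2 * Real.log ((designMatrix lam x T).det / _) ≤ _
  linarith
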